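/- arXiv:2303.05803 — 3 statements merged into one kernel-verified Lean document; each statement's English description precedes it below -/
import Mathlib

section
/- Suppose v : (1,∞) → (0,∞) is a decreasing function such that v(x)·log x = o(1) as x→∞, and suppose h : (1,∞) → (0,∞) is a function such that h(x) → ∞ and h(x) = o(log x) as x→∞. Then there exists a positive function y = y(x) with y(x) → ∞ as x→∞ such that, setting u = log x / log y(x): u → ∞ as x→∞, u ≤ h(x) for all sufficiently large x, and v(y(x))·log x = o(1) as x→∞. -/
open Filter

private lemma sqrt_self_le {x : ℝ} (hx : 1 ≤ x) : Real.sqrt x ≤ x := by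
  have h0 : (0:ℝ) ≤ x := le_trans zero_le_one hx
  calc Real.sqrt x ≤ Real.sqrt (x * x) :=
        Real.sqrt_le_sqrt (by nlinarith)
    _ = x := Real.sqrt_mul_self h0

private lemma sqrt_tendsto_atTop : Tendsto Real.sqrt atTop atTop := by
  rw [tendsto_atTop]
  intro b
  filter_upwards [eventually_ge_atTop (b ^ 2)] with x hx
  calc b ≤ |b| := le_abs_self b
    _ = Real.sqrt (b ^ 2) := (Real.sqrt_sq_eq_abs b).symm
    _ ≤ Real.sqrt x := Real.sqrt_le_sqrt hx

theorem stmt_6 (v : ℝ → ℝ) (hv_pos : ∀ x, 1 < x → 0 < v x)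
    (hv_dec : ∀ x y : ℝ, 1 < x → x ≤ y → v y ≤ v x)
    (hv : Tendsto (fun x => v x * Real.log x) atTop (nhds 0))
    (h : ℝ → ℝ) (hh_pos : ∀ x, 1 < x → 0 < h x)
    (hh_inf : Tendsto h atTop atTop)
    (hh : Tendsto (fun x => h x / Real.log x) atTop (nhds 0)) :
    ∃ y : ℝ → ℝ, (∀ x, 1 < x → 0 < y x) ∧
      Tendsto y atTop atTop ∧
      Tendsto (fun x => Real.log x / Real.log (y x)) atTop atTop ∧
      (∀ᶠ x in atTop, Real.log x / Real.log (y x) ≤ h x) ∧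
      Tendsto (fun x => v (y x) * Real.log x) atTop (nhds 0) := by
  classical
  set w : ℝ → ℝ := fun t => v t * Real.log t with hw_def
  -- a threshold beyond which w is bounded by 1
  obtain ⟨T, hT⟩ := (hv.eventually_lt_const (by norm_num : (0:ℝ) < 1)).exists_forall_of_atTop
  set t₀ : ℝ := max T 2 with ht₀_def
  have ht₀2 : (2:ℝ) ≤ t₀ := le_max_right _ _
  have hbdd : ∀ t : ℝ, t₀ ≤ t → BddAbove (w '' Set.Ici t) := by
    intro t ht
    refine ⟨1, ?_⟩
    rintro r ⟨s, hs, rfl⟩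
    exact le_of_lt (hT s (le_trans (le_trans (le_max_left _ _) ht) hs))
  set W : ℝ → ℝ := fun t => sSup (w '' Set.Ici t) with hW_def
  have hw_le_W : ∀ t s : ℝ, t₀ ≤ t → t ≤ s → w s ≤ W t := by
    intro t s ht hts
    exact le_csSup (hbdd t ht) ⟨s, hts, rfl⟩
  have hw_pos : ∀ t : ℝ, 1 < t → 0 < w t := by
    intro t ht
    exact mul_pos (hv_pos t ht) (Real.log_pos ht)
  have hW_pos : ∀ t : ℝ, t₀ ≤ t → 0 < W t := by
    intro t ht
    have h1 : (1:ℝ) < t := lt_of_lt_of_le (by norm_num) (le_trans ht₀2 ht)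
    exact lt_of_lt_of_le (hw_pos t h1) (hw_le_W t t ht le_rfl)
  -- W tends to 0
  have hW_tendsto : Tendsto W atTop (nhds 0) := by
    rw [Metric.tendsto_atTop]
    intro ε hε
    rw [Metric.tendsto_atTop] at hv
    obtain ⟨N, hN⟩ := hv (ε / 2) (by linarith)
    refine ⟨max N t₀, fun t ht => ?_⟩
    have htt₀ : t₀ ≤ t := le_trans (le_max_right _ _) ht
    have hWt_pos : 0 < W t := hW_pos t htt₀
    have hWt_le : W t ≤ ε / 2 := by
      apply csSup_le ((Set.nonempty_Ici).image w)
      rintro r ⟨s, hs, rfl⟩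
      have := hN s (le_trans (le_trans (le_max_left _ _) ht) hs)
      rw [Real.dist_eq, sub_zero] at this
      exact le_of_lt (lt_of_le_of_lt (le_abs_self _) this)
    rw [Real.dist_eq, sub_zero, abs_of_pos hWt_pos]
    linarith
  -- definitions of z, u, y
  set z : ℝ → ℝ := fun x => Real.exp (Real.log x / Real.sqrt (h x)) with hz_def
  set u : ℝ → ℝ := fun x => min (Real.sqrt (h x)) (1 / Real.sqrt (W (z x))) with hu_def
  set y : ℝ → ℝ := fun x => Real.exp (Real.log x / u x) with hy_def
  -- basic global limits
  have hsqrt_h : Tendsto (fun x => Real.sqrt (h x)) atTop atTop :=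
    sqrt_tendsto_atTop.comp hh_inf
  have hL : Tendsto Real.log atTop atTop := Real.tendsto_log_atTop
  have hsqrtL : Tendsto (fun x => Real.sqrt (Real.log x)) atTop atTop :=
    sqrt_tendsto_atTop.comp hL
  -- eventually h x ≤ log x
  have he_hL : ∀ᶠ x : ℝ in atTop, h x ≤ Real.log x := by
    filter_upwards [hh.eventually_lt_const (by norm_num : (0:ℝ) < 1),
      eventually_gt_atTop (1:ℝ)] with x h1 h2
    have hLx : 0 < Real.log x := Real.log_pos h2
    by_contra hc
    push_neg at hc
    have : 1 < h x / Real.log x := (one_lt_div hLx).2 hc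
    linarith
  -- L / sqrt h → ∞
  have hJ : Tendsto (fun x => Real.log x / Real.sqrt (h x)) atTop atTop := by
    apply tendsto_atTop_mono' atTop _ hsqrtL
    filter_upwards [he_hL, eventually_gt_atTop (1:ℝ), hh_inf.eventually_ge_atTop 1]
      with x h1 h2 h3
    have hLx : 0 < Real.log x := Real.log_pos h2
    have hsh_pos : 0 < Real.sqrt (h x) := Real.sqrt_pos.2 (by linarith)
    calc Real.sqrt (Real.log x) = Real.log x / Real.sqrt (Real.log x) :=
          (Real.div_sqrt).symm
      _ ≤ Real.log x / Real.sqrt (h x) := by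
          gcongr
  have hz_tendsto : Tendsto z atTop atTop := Real.tendsto_exp_atTop.comp hJ
  have hWz : Tendsto (fun x => W (z x)) atTop (nhds 0) := hW_tendsto.comp hz_tendsto
  have hsqrtWz : Tendsto (fun x => Real.sqrt (W (z x))) atTop (nhds 0) := by
    have : Tendsto Real.sqrt (nhds 0) (nhds 0) := by
      simpa using Real.continuous_sqrt.tendsto 0
    exact this.comp hWz
  have he_z : ∀ᶠ x : ℝ in atTop, t₀ ≤ z x := hz_tendsto.eventually_ge_atTop t₀
  have hinv : Tendsto (fun x => 1 / Real.sqrt (W (z x))) atTop atTop := by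
    simp only [one_div]
    apply Tendsto.inv_tendsto_nhdsGT_zero
    rw [tendsto_nhdsWithin_iff]
    refine ⟨hsqrtWz, ?_⟩
    filter_upwards [he_z] with x hx
    exact Real.sqrt_pos.2 (hW_pos _ hx)
  have hu_tendsto : Tendsto u atTop atTop := by
    rw [tendsto_atTop]
    intro b
    filter_upwards [hsqrt_h.eventually_ge_atTop b, hinv.eventually_ge_atTop b]
      with x h1 h2
    exact le_min h1 h2
  -- pointwise facts for large x
  have key : ∀ᶠ x : ℝ in atTop,
      Real.log x / Real.log (y x) = u x ∧
      u x ≤ h x ∧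
      Real.sqrt (Real.log x) ≤ Real.log x / u x ∧
      0 ≤ v (y x) * Real.log x ∧
      v (y x) * Real.log x ≤ Real.sqrt (W (z x)) := by
    filter_upwards [eventually_gt_atTop (1:ℝ), hh_inf.eventually_ge_atTop 1,
      he_hL, he_z] with x hx1 hhx1 hhL hzt₀
    have hLx : 0 < Real.log x := Real.log_pos hx1
    have hsh_pos : 0 < Real.sqrt (h x) := Real.sqrt_pos.2 (by linarith)
    have hWz_pos : 0 < W (z x) := hW_pos _ hzt₀
    have hsqW_pos : 0 < Real.sqrt (W (z x)) := Real.sqrt_pos.2 hWz_pos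
    have hu_pos : 0 < u x := lt_min hsh_pos (by positivity)
    have hu_le_sh : u x ≤ Real.sqrt (h x) := min_le_left _ _
    have hu_le_inv : u x ≤ 1 / Real.sqrt (W (z x)) := min_le_right _ _
    have hLy : Real.log (y x) = Real.log x / u x := Real.log_exp _
    have hLz : Real.log (z x) = Real.log x / Real.sqrt (h x) := Real.log_exp _
    have hz1 : 1 < z x := lt_of_lt_of_le (by norm_num) (le_trans ht₀2 hzt₀)
    have hzy : z x ≤ y x := by
      apply Real.exp_le_exp.2
      gcongr
    have hy1 : 1 < y x := lt_of_lt_of_le hz1 hzy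
    have hu_eq : Real.log x / Real.log (y x) = u x := by
      rw [hLy, div_div_eq_mul_div, mul_comm, mul_div_assoc, div_self hLx.ne',
        mul_one]
    refine ⟨hu_eq, ?_, ?_, ?_, ?_⟩
    · calc u x ≤ Real.sqrt (h x) := hu_le_sh
        _ ≤ h x := sqrt_self_le hhx1
    · calc Real.sqrt (Real.log x) = Real.log x / Real.sqrt (Real.log x) :=
            (Real.div_sqrt).symm
        _ ≤ Real.log x / Real.sqrt (h x) := by
            gcongr
        _ ≤ Real.log x / u x := by gcongr
    · exact mul_nonneg (hv_pos _ hy1).le hLx.le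
    · have hLx_eq : Real.log x = Real.log (y x) * u x := by
        rw [hLy, div_mul_cancel₀ _ hu_pos.ne']
      have hwy_le : w (y x) ≤ W (z x) := hw_le_W _ _ hzt₀ hzy
      calc v (y x) * Real.log x = w (y x) * u x := by
            rw [hLx_eq, hw_def]; ring
        _ ≤ W (z x) * (1 / Real.sqrt (W (z x))) := by
            apply mul_le_mul hwy_le hu_le_inv hu_pos.le hWz_pos.le
        _ = Real.sqrt (W (z x)) := by
            rw [mul_one_div, Real.div_sqrt]
  refine ⟨y, ?_, ?_, ?_, ?_, ?_⟩
  · intro x _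
    exact Real.exp_pos _
  · apply Real.tendsto_exp_atTop.comp
    apply tendsto_atTop_mono' atTop _ hsqrtL
    filter_upwards [key] with x hx
    exact hx.2.2.1
  · apply hu_tendsto.congr'
    filter_upwards [key] with x hx
    exact hx.1.symm
  · filter_upwards [key] with x hx
    rw [hx.1]
    exact hx.2.1
  · apply tendsto_of_tendsto_of_tendsto_of_le_of_le' tendsto_const_nhds hsqrtWz
    · filter_upwards [key] with x hx
      exact hx.2.2.2.1
    · filter_upwards [key] with x hx
      exact hx.2.2.2.2
end

section
/- Let F₁ : ℕ → ℂ and a : ℕ → ℂ be bounded functions and let F₂ be a compactly supported continuous function on ℝ. Set ψ(n) = (Ω(n) − log log N)/√(log log N). Then for any fixed integer m ∈ ℕ, (1/N) ∑_{n=1}^{N} F₁(P⁺(mn)) F₂(ψ(mn)) a(n) = (1/N) ∑_{n=1}^{N} F₁(P⁺(n)) F₂(ψ(n)) a(n) + o(1) as N→∞. -/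
/-!
Since `Ω(mn) = Ω(m) + Ω(n)`, replacing `n` by `mn` shifts `ψ` by `Ω(m)/√(log log N) → 0`
uniformly in `n`, so by uniform continuity of `F₂` the weights `F₂(ψ(mn))` and `F₂(ψ(n))` differ
by `o(1)` uniformly. Moreover `P⁺(mn) = max(P⁺(m), P⁺(n))` equals `P⁺(n)` unless every prime
factor of `n` is below `P⁺(m)`; such smooth `n ≤ N` number `O(√N)`, so they contribute `o(1)` to
the average of the bounded summands.
-/

open Filter

/-- `P⁺(n)`: the largest prime factor of `n`, with `P⁺(0) = P⁺(1) = 1`. -/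
def Pplus (n : ℕ) : ℕ := if n ≤ 1 then 1 else n.primeFactors.sup id

open Finset

section PrimeFactors

open Nat

lemma Pplus_eq_max {n : ℕ} (hn : n ≠ 0) : Pplus n = max 1 (n.primeFactors.sup id) := by
  unfold Pplus
  rcases Nat.lt_or_ge n 2 with h | h
  · interval_cases n <;> simp
  · obtain ⟨p, hp, hpn⟩ := Nat.exists_prime_and_dvd (by omega : n ≠ 1)
    have : p ≤ n.primeFactors.sup id := le_sup (f := id) (mem_primeFactors.2 ⟨hp, hpn, hn⟩)
    rw [if_neg (by omega), max_eq_right (by linarith [hp.two_le])]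

lemma Pplus_mul {m n : ℕ} (hm : m ≠ 0) (hn : n ≠ 0) :
    Pplus (m * n) = max (Pplus m) (Pplus n) := by
  rw [Pplus_eq_max (mul_ne_zero hm hn), Pplus_eq_max hm, Pplus_eq_max hn,
    primeFactors_mul hm hn, sup_union]
  omega

lemma le_Pplus_of_mem_primeFactors {n p : ℕ} (hp : p ∈ n.primeFactors) : p ≤ Pplus n := by
  rw [Pplus_eq_max (mem_primeFactors.1 hp).2.2]
  exact (le_sup (f := id) hp).trans (le_max_right _ _)

lemma Pplus_mul_of_notMem_smoothNumbers {m n : ℕ} (hm : m ≠ 0)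
    (hn : n ∉ smoothNumbers (Pplus m)) : Pplus (m * n) = Pplus n := by
  rcases eq_or_ne n 0 with rfl | hn0
  · simp
  obtain ⟨p, hp, hpn, hmp⟩ : ∃ p, p.Prime ∧ p ∣ n ∧ Pplus m ≤ p := by
    simpa [mem_smoothNumbers'] using hn
  have := le_Pplus_of_mem_primeFactors (mem_primeFactors.2 ⟨hp, hpn, hn0⟩)
  rw [Pplus_mul hm hn0, max_eq_right (by omega)]

lemma tendsto_card_smoothNumbersUpTo_div (k : ℕ) :
    Tendsto (fun N : ℕ => (#(smoothNumbersUpTo N k) : ℝ) / N) atTop (nhds 0) := by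
  have hlim : Tendsto (fun N : ℕ => (2 ^ #k.primesBelow : ℝ) * (Real.sqrt N)⁻¹) atTop (nhds 0) := by
    simpa using (tendsto_inv_atTop_zero.comp
      (Real.tendsto_sqrt_atTop.comp tendsto_natCast_atTop_atTop)).const_mul (2 ^ #k.primesBelow : ℝ)
  refine squeeze_zero (fun N => by positivity) (fun N => ?_) hlim
  calc (#(smoothNumbersUpTo N k) : ℝ) / N ≤ 2 ^ #k.primesBelow * Real.sqrt N / N := by
        gcongr
        calc (#(smoothNumbersUpTo N k) : ℝ) ≤ 2 ^ #k.primesBelow * N.sqrt := by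
              exact_mod_cast smoothNumbersUpTo_card_le N k
          _ ≤ 2 ^ #k.primesBelow * Real.sqrt N := by gcongr; exact Real.nat_sqrt_le_real_sqrt
    _ = 2 ^ #k.primesBelow * (Real.sqrt N)⁻¹ := by rw [mul_div_assoc, Real.sqrt_div_self', one_div]

end PrimeFactors

lemma UniformContinuous.tendstoUniformly_comp_sub_comp {α β ι E : Type*} [PseudoMetricSpace α]
    [SeminormedAddCommGroup E] {g : α → E} (hg : UniformContinuous g) {l : Filter β}
    {x y : β → ι → α} {δ : β → ℝ} (hδ : Tendsto δ l (nhds 0))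
    (hxy : ∀ b i, dist (x b i) (y b i) ≤ δ b) :
    TendstoUniformly (fun b i => g (x b i) - g (y b i)) 0 l := by
  rw [Metric.tendstoUniformly_iff]
  intro ε hε
  obtain ⟨η, hη, hgη⟩ := Metric.uniformContinuous_iff.1 hg ε hε
  filter_upwards [hδ.eventually (gt_mem_nhds hη)] with b hb i
  rw [Pi.zero_apply, dist_zero_left, ← dist_eq_norm]
  exact hgη ((hxy b i).trans_lt hb)

section Averages

variable {𝕜 : Type*} [RCLike 𝕜]

lemma norm_average_le {u : ℕ → 𝕜} {N : ℕ} {c : ℝ} (hc : 0 ≤ c)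
    (hu : ∀ n ∈ Icc 1 N, ‖u n‖ ≤ c) : ‖(N : 𝕜)⁻¹ * ∑ n ∈ Icc 1 N, u n‖ ≤ c := by
  rcases eq_or_ne N 0 with rfl | hN
  · simpa using hc
  calc ‖(N : 𝕜)⁻¹ * ∑ n ∈ Icc 1 N, u n‖ ≤ (N : ℝ)⁻¹ * ∑ n ∈ Icc 1 N, c := by
        rw [norm_mul, norm_inv, RCLike.norm_natCast]
        gcongr
        exact norm_sum_le_of_le _ hu
    _ = c := by simp [field]

lemma tendsto_average_mul_of_tendstoUniformly {b e : ℕ → ℕ → 𝕜} {C : ℝ}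
    (hb : ∀ N n, ‖b N n‖ ≤ C) (he : TendstoUniformly e 0 atTop) :
    Tendsto (fun N : ℕ => (N : 𝕜)⁻¹ * ∑ n ∈ Icc 1 N, b N n * e N n) atTop (nhds 0) := by
  have hC : 0 ≤ C := (norm_nonneg _).trans (hb 0 0)
  rw [NormedAddGroup.tendsto_nhds_zero]
  intro ε hε
  filter_upwards [Metric.tendstoUniformly_iff.1 he (ε / (C + 1)) (by positivity)] with N hN
  refine (norm_average_le (c := C * (ε / (C + 1))) (by positivity) fun n _ => ?_).trans_lt ?_
  · have := hN n
    rw [Pi.zero_apply, dist_zero_left] at this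
    rw [norm_mul]
    gcongr
    exact hb N n
  · rw [mul_div_assoc', div_lt_iff₀ (by positivity)]
    nlinarith

lemma tendsto_average_of_sparse_support {v : ℕ → ℕ → 𝕜} {C : ℝ} (hv : ∀ N n, ‖v N n‖ ≤ C)
    {T : ℕ → Finset ℕ} (hT : Tendsto (fun N : ℕ => (#(T N) : ℝ) / N) atTop (nhds 0))
    (hvT : ∀ N, ∀ n ∈ Icc 1 N, n ∉ T N → v N n = 0) :
    Tendsto (fun N : ℕ => (N : 𝕜)⁻¹ * ∑ n ∈ Icc 1 N, v N n) atTop (nhds 0) := by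
  have hC : 0 ≤ C := (norm_nonneg _).trans (hv 0 0)
  refine squeeze_zero_norm (fun N => ?_) (by simpa [mul_div_assoc] using hT.const_mul C)
  rw [← sum_subset inter_subset_left fun n hn hnT => hvT N n hn fun h => hnT (mem_inter.2 ⟨hn, h⟩),
    norm_mul, norm_inv, RCLike.norm_natCast, mul_div_assoc', inv_mul_eq_div]
  gcongr
  calc ‖∑ n ∈ Icc 1 N ∩ T N, v N n‖ ≤ ∑ n ∈ Icc 1 N ∩ T N, C := norm_sum_le_of_le _ fun n _ => hv N n
    _ = #(Icc 1 N ∩ T N) * C := by rw [sum_const, nsmul_eq_mul]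
    _ ≤ C * #(T N) := by rw [mul_comm]; gcongr; exact inter_subset_right

end Averages

noncomputable def normalizedOmega (N k : ℕ) : ℝ :=
  ((k.primeFactorsList.length : ℝ) - Real.log (Real.log N)) / Real.sqrt (Real.log (Real.log N))

lemma dist_normalizedOmega_mul_le {m : ℕ} (hm : m ≠ 0) (N n : ℕ) :
    dist (normalizedOmega N (m * n)) (normalizedOmega N n) ≤
      m.primeFactorsList.length / Real.sqrt (Real.log (Real.log N)) := by
  rcases eq_or_ne n 0 with rfl | hn
  · simp only [mul_zero, dist_self]
    positivity
  have hΩ := ArithmeticFunction.cardFactors_mul hm hn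
  simp only [ArithmeticFunction.cardFactors_apply] at hΩ
  rw [normalizedOmega, normalizedOmega, hΩ, Real.dist_eq, ← sub_div, Nat.cast_add,
    add_sub_assoc, add_sub_cancel_right, abs_div, abs_of_nonneg (Real.sqrt_nonneg _),
    Nat.abs_cast]

lemma tendsto_div_sqrt_log_log (c : ℝ) :
    Tendsto (fun N : ℕ => c / Real.sqrt (Real.log (Real.log N))) atTop (nhds 0) := by
  simpa [div_eq_mul_inv] using (tendsto_inv_atTop_zero.comp (Real.tendsto_sqrt_atTop.comp
    (Real.tendsto_log_atTop.comp (Real.tendsto_log_atTop.comp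
      tendsto_natCast_atTop_atTop)))).const_mul c

theorem stmt_10 (F₁ : ℕ → ℂ) (hF₁ : ∃ C, ∀ n, ‖F₁ n‖ ≤ C)
    (a : ℕ → ℂ) (ha : ∃ C, ∀ n, ‖a n‖ ≤ C)
    (F₂ : ℝ → ℝ) (hF₂_cont : Continuous F₂) (hF₂_supp : HasCompactSupport F₂)
    (m : ℕ) (hm : 0 < m) :
    Tendsto (fun N : ℕ =>
        (N : ℂ)⁻¹ * (∑ n ∈ Finset.Icc 1 N,
            F₁ (Pplus (m * n)) *
              (F₂ ((((m * n).primeFactorsList.length : ℝ) - Real.log (Real.log N)) /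
                Real.sqrt (Real.log (Real.log N))) : ℂ) * a n) -
        (N : ℂ)⁻¹ * (∑ n ∈ Finset.Icc 1 N,
            F₁ (Pplus n) *
              (F₂ (((n.primeFactorsList.length : ℝ) - Real.log (Real.log N)) /
                Real.sqrt (Real.log (Real.log N))) : ℂ) * a n))
      atTop (nhds 0) := by
  obtain ⟨C₁, hC₁⟩ := hF₁
  obtain ⟨Ca, hCa⟩ := ha
  obtain ⟨M, hM⟩ := hF₂_supp.exists_bound_of_continuous hF₂_cont
  have hshift : TendstoUniformly (fun N n =>
      (F₂ (normalizedOmega N (m * n)) : ℂ) - F₂ (normalizedOmega N n)) 0 atTop :=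
    (Complex.isometry_ofReal.uniformContinuous.comp
      (hF₂_supp.uniformContinuous_of_continuous hF₂_cont)).tendstoUniformly_comp_sub_comp
      (tendsto_div_sqrt_log_log _) (dist_normalizedOmega_mul_le hm.ne')
  have hU := tendsto_average_mul_of_tendstoUniformly (C := C₁ * Ca)
    (b := fun N n => F₁ (Pplus (m * n)) * a n)
    (fun N n => norm_mul_le_of_le (hC₁ _) (hCa _)) hshift
  have hV := tendsto_average_of_sparse_support (C := (C₁ + C₁) * M * Ca)
    (v := fun N n => (F₁ (Pplus (m * n)) - F₁ (Pplus n)) * F₂ (normalizedOmega N n) * a n)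
    (fun N n => norm_mul_le_of_le (norm_mul_le_of_le (norm_sub_le_of_le (hC₁ _) (hC₁ _))
      ((Complex.norm_real _).trans_le (hM _))) (hCa _))
    (tendsto_card_smoothNumbersUpTo_div (Pplus m))
    (fun N n hn hsmooth => by
      rw [Pplus_mul_of_notMem_smoothNumbers hm.ne'
        fun h => hsmooth (Nat.mem_smoothNumbersUpTo.2 ⟨(mem_Icc.1 hn).2, h⟩), sub_self,
        zero_mul, zero_mul])
  convert hU.add hV using 2 with N
  · rw [← mul_sub, ← sum_sub_distrib, ← mul_add, ← sum_add_distrib]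
    refine congrArg _ (sum_congr rfl fun n _ => ?_)
    simp only [normalizedOmega]
    ring
  · simp
end

section
/- Let B ⊂ ℕ be a finite non-empty set of positive integers. Then for any arithmetic function a : ℕ → ℂ with |a| ≤ 1, one has limsup_{N→∞} | 𝔼_{n∈[N]} a(n) − 𝔼^{log}_{m∈B} 𝔼_{n∈[N/m]} a(mn) | ≤ ( 𝔼^{log}_{m∈B} 𝔼^{log}_{n∈B} Φ(m,n) )^{1/2}, where Φ(m,n) := gcd(m,n) − 1. -/
/-!
With `D(n) = #{m ∈ B | m ∣ n}` and `L = ∑_{m ∈ B} 1/m`, swapping the sums shows that, up to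
`O(#B / N)`, the logarithmic average of the dilated Cesàro averages is
`(1/N) ∑_{n ≤ N} (D(n)/L) a(n)`. The difference with `𝔼_{n ∈ [N]} a(n)` is then
`(1/N) ∑_{n ≤ N} (1 - D(n)/L) a(n)`, which Cauchy–Schwarz bounds by the square root of
`(1/N) ∑_{n ≤ N} (1 - D(n)/L)²`. Expanding the square, `∑ D(n) ≥ N L - #B` and
`∑ D(n)² = ∑_{m, m' ∈ B} ⌊N / lcm(m, m')⌋ ≤ N ∑_{m, m' ∈ B} gcd(m, m') / (m m')`, so this mean
square is at most `𝔼^{log} 𝔼^{log} Φ + O(1/N)`.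
-/

open Filter

/-- Cesàro average of `a` over `[N] = {1, …, N}`. -/
noncomputable def cesaroAvg (N : ℕ) (a : ℕ → ℂ) : ℂ :=
  (N : ℂ)⁻¹ * ∑ n ∈ Finset.Icc 1 N, a n

/-- Logarithmic average of a complex-valued function over a finite set `B`. -/
noncomputable def logAvgC (B : Finset ℕ) (c : ℕ → ℂ) : ℂ :=
  (∑ m ∈ B, c m / (m : ℂ)) / (∑ m ∈ B, 1 / (m : ℂ))

/-- Logarithmic average of a real-valued function over a finite set `B`. -/
noncomputable def logAvgR (B : Finset ℕ) (c : ℕ → ℝ) : ℝ :=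
  (∑ m ∈ B, c m / (m : ℝ)) / (∑ m ∈ B, 1 / (m : ℝ))

open Finset Topology

namespace Nat

theorem card_Icc_filter_dvd (N m : ℕ) : #{n ∈ Icc 1 N | m ∣ n} = N / m := by
  rw [← Nat.Ioc_filter_dvd_card_eq_div N m, ← Finset.Icc_add_one_left_eq_Ioc, zero_add]

theorem sum_Icc_filter_dvd {M : Type*} [AddCommMonoid M] {m : ℕ} (hm : 0 < m) (N : ℕ)
    (f : ℕ → M) : ∑ n ∈ Icc 1 N with m ∣ n, f n = ∑ k ∈ Icc 1 (N / m), f (m * k) := by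
  refine (Finset.sum_nbij' (fun k => m * k) (fun n => n / m) ?_ ?_ ?_ ?_ ?_).symm
  · intro k hk
    simp only [mem_filter, mem_Icc] at hk ⊢
    refine ⟨⟨Nat.mul_pos hm hk.1, ?_⟩, dvd_mul_right m k⟩
    exact (Nat.mul_le_mul_left m hk.2).trans (Nat.mul_div_le N m)
  · intro n hn
    simp only [mem_filter, mem_Icc] at hn ⊢
    exact ⟨(Nat.one_le_div_iff hm).2 (Nat.le_of_dvd hn.1.1 hn.2), Nat.div_le_div_right hn.1.2⟩
  · intro k _
    exact Nat.mul_div_cancel_left k hm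
  · intro n hn
    exact Nat.mul_div_cancel' (mem_filter.1 hn).2
  · intro _ _
    rfl

end Nat

def divCount (B : Finset ℕ) (n : ℕ) : ℕ := #{m ∈ B | m ∣ n}

theorem sum_Icc_divCount (B : Finset ℕ) (N : ℕ) :
    ∑ n ∈ Icc 1 N, divCount B n = ∑ m ∈ B, N / m := by
  simp_rw [divCount, card_filter]
  rw [sum_comm]
  simp_rw [← card_filter, Nat.card_Icc_filter_dvd]

theorem divCount_sq (B : Finset ℕ) (n : ℕ) :
    divCount B n ^ 2 = ∑ m ∈ B, ∑ m' ∈ B, if Nat.lcm m m' ∣ n then 1 else 0 := by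
  simp_rw [divCount, card_filter, sq, sum_mul_sum, Nat.lcm_dvd_iff, ite_zero_mul_ite_zero, mul_one]

theorem sum_Icc_divCount_sq (B : Finset ℕ) (N : ℕ) :
    ∑ n ∈ Icc 1 N, divCount B n ^ 2 = ∑ m ∈ B, ∑ m' ∈ B, N / Nat.lcm m m' := by
  simp_rw [divCount_sq]
  rw [sum_comm]
  refine sum_congr rfl fun m _ => ?_
  rw [sum_comm]
  simp_rw [← card_filter, Nat.card_Icc_filter_dvd]

theorem sum_sum_Icc_div_mul_eq_sum_divCount_smul {M : Type*} [AddCommMonoid M] {B : Finset ℕ}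
    (hB : ∀ m ∈ B, 0 < m) (N : ℕ) (f : ℕ → M) :
    ∑ m ∈ B, ∑ k ∈ Icc 1 (N / m), f (m * k) = ∑ n ∈ Icc 1 N, divCount B n • f n := by
  calc ∑ m ∈ B, ∑ k ∈ Icc 1 (N / m), f (m * k)
      = ∑ m ∈ B, ∑ n ∈ Icc 1 N, if m ∣ n then f n else 0 := by
        refine sum_congr rfl fun m hm => ?_
        rw [← Nat.sum_Icc_filter_dvd (hB m hm), sum_filter]
    _ = ∑ n ∈ Icc 1 N, divCount B n • f n := by
        rw [sum_comm]
        simp_rw [← sum_filter, sum_const, divCount]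

noncomputable def logWeight (B : Finset ℕ) : ℝ := ∑ m ∈ B, 1 / (m : ℝ)

noncomputable def logGcdSum (B : Finset ℕ) : ℝ :=
  ∑ m ∈ B, ∑ m' ∈ B, (Nat.gcd m m' : ℝ) / (m * m')

theorem logWeight_pos {B : Finset ℕ} (hB : B.Nonempty) (hB_pos : ∀ m ∈ B, 0 < m) :
    0 < logWeight B :=
  sum_pos (fun m hm => by have := hB_pos m hm; positivity) hB

theorem logAvgR_logAvgR (B : Finset ℕ) (f : ℕ → ℕ → ℝ) :
    logAvgR B (fun m => logAvgR B (f m)) =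
      (∑ m ∈ B, ∑ m' ∈ B, f m m' / (m * m')) / logWeight B ^ 2 := by
  simp only [logAvgR]
  rw [← logWeight, sq, ← div_div, sum_div]
  simp_rw [div_div, sum_div, div_div]
  refine sum_congr rfl fun m _ => sum_congr rfl fun m' _ => ?_
  ring

theorem logAvgR_logAvgR_gcd_sub_one {B : Finset ℕ} (hL : logWeight B ≠ 0) :
    logAvgR B (fun m => logAvgR B fun m' => (Nat.gcd m m' : ℝ) - 1) =
      logGcdSum B / logWeight B ^ 2 - 1 := by
  have hsum : ∑ m ∈ B, ∑ m' ∈ B, (1 : ℝ) / (m * m') = logWeight B ^ 2 := by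
    simp_rw [logWeight, sq, sum_mul_sum, one_div_mul_one_div]
  simp_rw [logAvgR_logAvgR, sub_div, sum_sub_distrib, hsum, logGcdSum]
  rw [sub_div, div_self (pow_ne_zero 2 hL)]

theorem natCast_mul_logWeight_sub_card_le (B : Finset ℕ) (N : ℕ) :
    N * logWeight B - #B ≤ ∑ n ∈ Icc 1 N, (divCount B n : ℝ) := by
  rw [← Nat.cast_sum, sum_Icc_divCount, Nat.cast_sum, logWeight, mul_sum, card_eq_sum_ones,
    Nat.cast_sum, ← sum_sub_distrib]
  refine sum_le_sum fun m _ => ?_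
  rw [← Nat.floor_div_eq_div (K := ℝ), Nat.cast_one, mul_one_div]
  exact (Nat.sub_one_lt_floor _).le

theorem natCast_div_lcm_le (N m m' : ℕ) :
    ((N / Nat.lcm m m' : ℕ) : ℝ) ≤ N * ((Nat.gcd m m' : ℝ) / (m * m')) := by
  rw [← Nat.cast_mul, ← Nat.gcd_mul_lcm, Nat.cast_mul]
  rcases eq_or_ne (Nat.gcd m m') 0 with h | h
  · simp [(Nat.gcd_eq_zero_iff.1 h).1]
  · rw [div_mul_cancel_left₀ (Nat.cast_ne_zero.2 h), ← div_eq_mul_inv]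
    exact Nat.cast_div_le

theorem sum_divCount_sq_le (B : Finset ℕ) (N : ℕ) :
    ∑ n ∈ Icc 1 N, (divCount B n : ℝ) ^ 2 ≤ N * logGcdSum B := by
  simp_rw [← Nat.cast_pow, ← Nat.cast_sum, sum_Icc_divCount_sq, Nat.cast_sum, logGcdSum, mul_sum]
  exact sum_le_sum fun m _ => sum_le_sum fun m' _ => natCast_div_lcm_le N m m'

theorem sum_sq_one_sub_divCount_div_le {B : Finset ℕ} (hL : 0 < logWeight B) (N : ℕ) :
    ∑ n ∈ Icc 1 N, (1 - divCount B n / logWeight B) ^ 2 ≤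
      N * (logGcdSum B / logWeight B ^ 2 - 1) + 2 * #B / logWeight B := by
  set L := logWeight B
  have hsq (x : ℝ) : (1 - x / L) ^ 2 = 1 - 2 / L * x + x ^ 2 / L ^ 2 := by
    field_simp
    ring
  simp_rw [hsq]
  rw [sum_add_distrib, sum_sub_distrib, ← mul_sum, ← sum_div, sum_const, Nat.card_Icc,
    Nat.add_sub_cancel, nsmul_one]
  calc (N : ℝ) - 2 / L * ∑ n ∈ Icc 1 N, (divCount B n : ℝ) +
        (∑ n ∈ Icc 1 N, (divCount B n : ℝ) ^ 2) / L ^ 2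
      ≤ N - 2 / L * (N * L - #B) + N * logGcdSum B / L ^ 2 := by
        gcongr
        · exact natCast_mul_logWeight_sub_card_le B N
        · exact sum_divCount_sq_le B N
    _ = N * (logGcdSum B / L ^ 2 - 1) + 2 * #B / L := by
        field_simp
        ring

theorem norm_sum_smul_sq_le {ι E : Type*} [SeminormedAddCommGroup E] [NormedSpace ℝ E]
    (s : Finset ι) (w : ι → ℝ) {a : ι → E} (ha : ∀ i ∈ s, ‖a i‖ ≤ 1) :
    ‖∑ i ∈ s, w i • a i‖ ^ 2 ≤ #s * ∑ i ∈ s, w i ^ 2 := by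
  have hsum : ‖∑ i ∈ s, w i • a i‖ ≤ ∑ i ∈ s, |w i| := by
    refine (norm_sum_le _ _).trans (sum_le_sum fun i hi => ?_)
    rw [norm_smul, Real.norm_eq_abs]
    exact mul_le_of_le_one_right (abs_nonneg _) (ha i hi)
  calc ‖∑ i ∈ s, w i • a i‖ ^ 2 ≤ (∑ i ∈ s, |w i|) ^ 2 := by gcongr
    _ ≤ #s * ∑ i ∈ s, |w i| ^ 2 := sq_sum_le_card_mul_sum_sq
    _ = #s * ∑ i ∈ s, w i ^ 2 := by simp_rw [sq_abs]

theorem norm_cesaroAvg_le_one (N : ℕ) {b : ℕ → ℂ} (hb : ∀ n, ‖b n‖ ≤ 1) :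
    ‖cesaroAvg N b‖ ≤ 1 := by
  have hsum : ‖∑ n ∈ Icc 1 N, b n‖ ≤ N := by
    refine (norm_sum_le _ _).trans ((sum_le_sum fun n _ => hb n).trans ?_)
    simp
  rw [cesaroAvg, norm_mul, norm_inv, Complex.norm_natCast]
  exact inv_mul_le_one_of_le₀ hsum (Nat.cast_nonneg N)

theorem natCast_mul_cesaroAvg (N : ℕ) (b : ℕ → ℂ) :
    (N : ℂ) * cesaroAvg N b = ∑ n ∈ Icc 1 N, b n := by
  rcases eq_or_ne N 0 with rfl | hN
  · simp
  · exact mul_inv_cancel_left₀ (Nat.cast_ne_zero.2 hN) _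

theorem norm_cesaroAvg_div_sub_sum_div_le {b : ℕ → ℂ} (hb : ∀ n, ‖b n‖ ≤ 1) {m N : ℕ}
    (hm : 0 < m) (hN : 0 < N) :
    ‖cesaroAvg (N / m) b / m - (∑ k ∈ Icc 1 (N / m), b k) / N‖ ≤ 1 / N := by
  rw [← natCast_mul_cesaroAvg]
  set c := cesaroAvg (N / m) b
  have hmR : (0 : ℝ) < m := Nat.cast_pos.2 hm
  have hNR : (0 : ℝ) < N := Nat.cast_pos.2 hN
  have hdiv : (N : ℝ) = m * (N / m : ℕ) + (N % m : ℕ) := by exact_mod_cast (Nat.div_add_mod N m).symm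
  have hrem : ((N % m : ℕ) : ℝ) ≤ m := by exact_mod_cast (Nat.mod_lt N hm).le
  have hcoef : (1 : ℝ) / m - (N / m : ℕ) / N = (N % m : ℕ) / (m * N) := by
    field_simp
    linarith
  have hc : c / m - (N / m : ℕ) * c / N = (((N % m : ℕ) : ℝ) / (m * N) : ℝ) * c := by
    rw [← hcoef]
    push_cast
    ring
  rw [hc, norm_mul, Complex.norm_real, Real.norm_of_nonneg (by positivity)]
  calc ((N % m : ℕ) : ℝ) / (m * N) * ‖c‖ ≤ m / (m * N) * 1 := by
        gcongr
        exact norm_cesaroAvg_le_one _ fun n => hb n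
    _ = 1 / N := by field_simp

noncomputable def divCountAvg (B : Finset ℕ) (N : ℕ) (a : ℕ → ℂ) : ℂ :=
  (N : ℂ)⁻¹ * ∑ n ∈ Icc 1 N, (divCount B n / logWeight B : ℝ) • a n

theorem cesaroAvg_sub_divCountAvg (B : Finset ℕ) (N : ℕ) (a : ℕ → ℂ) :
    cesaroAvg N a - divCountAvg B N a =
      (N : ℂ)⁻¹ * ∑ n ∈ Icc 1 N, (1 - divCount B n / logWeight B : ℝ) • a n := by
  simp_rw [cesaroAvg, divCountAvg, sub_smul, one_smul, sum_sub_distrib, mul_sub]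

theorem norm_cesaroAvg_sub_divCountAvg_le {B : Finset ℕ} (hL : 0 < logWeight B) {a : ℕ → ℂ}
    (ha : ∀ n, ‖a n‖ ≤ 1) {N : ℕ} (hN : 0 < N) :
    ‖cesaroAvg N a - divCountAvg B N a‖ ≤
      √(logGcdSum B / logWeight B ^ 2 - 1 + 2 * (#B / (N * logWeight B))) := by
  have hNR : (0 : ℝ) < N := Nat.cast_pos.2 hN
  rw [cesaroAvg_sub_divCountAvg, norm_mul, norm_inv, Complex.norm_natCast,
    ← abs_of_nonneg (by positivity : 0 ≤ (N : ℝ)⁻¹ * ‖∑ n ∈ Icc 1 N, _‖)]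
  refine Real.abs_le_sqrt ?_
  have hcs := norm_sum_smul_sq_le (Icc 1 N) (fun n => 1 - divCount B n / logWeight B)
    (fun n _ => ha n)
  rw [Nat.card_Icc, Nat.add_sub_cancel] at hcs
  calc ((N : ℝ)⁻¹ * ‖∑ n ∈ Icc 1 N, (1 - divCount B n / logWeight B : ℝ) • a n‖) ^ 2
      ≤ (N : ℝ)⁻¹ ^ 2 * (N * (N * (logGcdSum B / logWeight B ^ 2 - 1) + 2 * #B / logWeight B)) := by
        rw [mul_pow]
        gcongr
        exact hcs.trans (by gcongr; exact sum_sq_one_sub_divCount_div_le hL N)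
    _ = logGcdSum B / logWeight B ^ 2 - 1 + 2 * (#B / (N * logWeight B)) := by
        field_simp

theorem norm_logAvgC_sub_divCountAvg_le {B : Finset ℕ} (hB_pos : ∀ m ∈ B, 0 < m)
    (hL : 0 < logWeight B) {a : ℕ → ℂ} (ha : ∀ n, ‖a n‖ ≤ 1) {N : ℕ} (hN : 0 < N) :
    ‖logAvgC B (fun m => cesaroAvg (N / m) fun n => a (m * n)) - divCountAvg B N a‖ ≤
      #B / (N * logWeight B) := by
  have hLC : ∑ m ∈ B, 1 / (m : ℂ) = logWeight B := by
    simp [logWeight]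
  have hH : divCountAvg B N a =
      (∑ m ∈ B, (∑ k ∈ Icc 1 (N / m), a (m * k)) / N) / logWeight B := by
    rw [divCountAvg, ← sum_div, sum_sum_Icc_div_mul_eq_sum_divCount_smul hB_pos]
    simp_rw [Complex.real_smul, nsmul_eq_mul]
    push_cast
    simp_rw [div_mul_eq_mul_div, ← sum_div]
    ring
  rw [logAvgC, hLC, hH, ← sub_div, ← sum_sub_distrib, norm_div, Complex.norm_real,
    Real.norm_of_nonneg hL.le]
  calc ‖∑ m ∈ B, (cesaroAvg (N / m) (fun n => a (m * n)) / m -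
          (∑ k ∈ Icc 1 (N / m), a (m * k)) / N)‖ / logWeight B
      ≤ (∑ _m ∈ B, 1 / (N : ℝ)) / logWeight B := by
        gcongr
        exact (norm_sum_le _ _).trans (sum_le_sum fun m hm =>
          norm_cesaroAvg_div_sub_sum_div_le (fun n => ha _) (hB_pos m hm) hN)
    _ = #B / (N * logWeight B) := by
        rw [sum_const, nsmul_eq_mul]
        field_simp

theorem stmt_12 (B : Finset ℕ) (hB : B.Nonempty) (hB_pos : ∀ n ∈ B, 0 < n)
    (a : ℕ → ℂ) (ha : ∀ n, ‖a n‖ ≤ 1) :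
    Filter.limsup (fun N : ℕ =>
        ‖cesaroAvg N a - logAvgC B (fun m => cesaroAvg (N / m) (fun n => a (m * n)))‖)
      atTop ≤
    Real.sqrt (logAvgR B (fun m => logAvgR B (fun n => (Nat.gcd m n : ℝ) - 1))) := by
  have hL := logWeight_pos hB hB_pos
  rw [logAvgR_logAvgR_gcd_sub_one hL.ne']
  set Q := logGcdSum B / logWeight B ^ 2 - 1
  set ε : ℕ → ℝ := fun N => #B / (N * logWeight B)
  have hε : Tendsto ε atTop (𝓝 0) := by
    simpa [ε, div_mul_eq_div_div_swap] using
      tendsto_const_div_atTop_nhds_zero_nat (#B / logWeight B : ℝ)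
  have hbound : Tendsto (fun N => ε N + √(Q + 2 * ε N)) atTop (𝓝 (√Q)) := by
    simpa using hε.add ((hε.const_mul 2).const_add Q).sqrt
  have hle : ∀ᶠ N in atTop,
      ‖cesaroAvg N a - logAvgC B (fun m => cesaroAvg (N / m) fun n => a (m * n))‖ ≤
        ε N + √(Q + 2 * ε N) := by
    filter_upwards [eventually_gt_atTop 0] with N hN
    rw [add_comm]
    exact (norm_sub_le_norm_sub_add_norm_sub _ (divCountAvg B N a) _).trans (add_le_add
      (norm_cesaroAvg_sub_divCountAvg_le hL ha hN)
      (norm_sub_rev (divCountAvg B N a) _ ▸ norm_logAvgC_sub_divCountAvg_le hB_pos hL ha hN))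
  exact (limsup_le_limsup hle (isBoundedUnder_of ⟨0, fun _ => norm_nonneg _⟩).isCoboundedUnder_le
    hbound.isBoundedUnder_le).trans_eq hbound.limsup_eq
end
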